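/- arXiv:1701.08294 — 6 statements merged into one kernel-verified Lean document; each statement's English description precedes it below -/
import Mathlib

section
/- Let f = x²p(y,z) + 2xz·q(y,z) + z²r(y,z) be a positive semi-definite quartic form in ℝ[x,y,z] (p, q, r quadratic forms) with f(1,0,0) = f(0,1,0) = 0, and suppose r(1,0) = 0 and r is not identically zero, so r = t z² with t > 0. Then z divides q, and writing q = √t·z·q₁ with q₁ linear, one has f = (√t z² + x q₁)² + x²(p - q₁²), where p - q₁² ≥ 0 on ℝ². -/
private lemma limit_nonneg (g : ℝ → ℝ) (hg : Continuous g)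
    (h : ∀ z : ℝ, z ≠ 0 → 0 ≤ g z) : 0 ≤ g 0 := by
  have htend : Filter.Tendsto g (nhdsWithin 0 {(0:ℝ)}ᶜ) (nhds (g 0)) :=
    (hg.tendsto 0).mono_left nhdsWithin_le_nhds
  exact ge_of_tendsto htend (eventually_nhdsWithin_of_forall fun z hz => h z hz)

theorem stmt_5 (f : ℝ → ℝ → ℝ → ℝ) (p q r : ℝ → ℝ → ℝ)
    (pa pb pc qa qb qc t : ℝ)
    (hp : ∀ y z, p y z = pa * y ^ 2 + pb * y * z + pc * z ^ 2)
    (hq : ∀ y z, q y z = qa * y ^ 2 + qb * y * z + qc * z ^ 2)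
    (hr : ∀ y z : ℝ, r y z = t * z ^ 2)
    (ht : 0 < t)
    (hr10 : r 1 0 = 0)
    (hf : ∀ x y z, f x y z = x ^ 2 * p y z + 2 * x * z * q y z + z ^ 2 * r y z)
    (hpsd : ∀ x y z, 0 ≤ f x y z)
    (h1 : f 1 0 0 = 0) (h2 : f 0 1 0 = 0) :
    qa = 0 ∧
    ∃ a b : ℝ,
      (∀ y z : ℝ, q y z = Real.sqrt t * z * (a * y + b * z)) ∧
      (∀ x y z : ℝ, f x y z =
        (Real.sqrt t * z ^ 2 + x * (a * y + b * z)) ^ 2 +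
          x ^ 2 * (p y z - (a * y + b * z) ^ 2)) ∧
      (∀ y z : ℝ, 0 ≤ p y z - (a * y + b * z) ^ 2) := by
  have hst : (0:ℝ) < Real.sqrt t := Real.sqrt_pos.mpr ht
  have hst2 : Real.sqrt t * Real.sqrt t = t := Real.mul_self_sqrt ht.le
  -- discriminant inequality
  have key : ∀ y z : ℝ, (2 * z * q y z) ^ 2 - 4 * (p y z) * (z ^ 2 * r y z) ≤ 0 := by
    intro y z
    have h := discrim_le_zero (a := p y z) (b := 2 * z * q y z) (c := z ^ 2 * r y z)
      (fun x => by have e := hf x y z; have h0 := hpsd x y z; nlinarith [e, h0])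
    simpa [discrim] using h
  have hne : ∀ y z : ℝ, z ≠ 0 → (qa * y ^ 2 + qb * y * z + qc * z ^ 2) ^ 2
      ≤ t * (pa * y ^ 2 + pb * y * z + pc * z ^ 2) * z ^ 2 := by
    intro y z hz
    have h := key y z
    rw [hp, hq, hr] at h
    have hz2 : (0:ℝ) < z ^ 2 := by positivity
    have hd : 0 ≤ z ^ 2 * (t * (pa * y ^ 2 + pb * y * z + pc * z ^ 2) * z ^ 2
        - (qa * y ^ 2 + qb * y * z + qc * z ^ 2) ^ 2) := by nlinarith [h]
    nlinarith [hd, hz2, mul_pos hz2 hz2]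
  have key2 : ∀ y z : ℝ, (qa * y ^ 2 + qb * y * z + qc * z ^ 2) ^ 2
      ≤ t * (pa * y ^ 2 + pb * y * z + pc * z ^ 2) * z ^ 2 := by
    intro y z
    rcases eq_or_ne z 0 with hz | hz
    · subst hz
      have hcont : Continuous (fun z : ℝ => t * (pa * y ^ 2 + pb * y * z + pc * z ^ 2) * z ^ 2
          - (qa * y ^ 2 + qb * y * z + qc * z ^ 2) ^ 2) := by fun_prop
      have := limit_nonneg _ hcont (fun z hz => by have := hne y z hz; linarith)
      simpa using this
    · exact hne y z hz
  -- qa = 0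
  have hqa : qa = 0 := by
    have h0 := key2 1 0
    have : qa ^ 2 = 0 := le_antisymm (by nlinarith [h0]) (sq_nonneg qa)
    exact (pow_eq_zero_iff two_ne_zero).mp this
  have hA : ∀ y z : ℝ, Real.sqrt t * (qb / Real.sqrt t * y + qc / Real.sqrt t * z)
      = qb * y + qc * z := by
    intro y z; field_simp
  refine ⟨hqa, qb / Real.sqrt t, qc / Real.sqrt t, ?_, ?_, ?_⟩
  · intro y z
    rw [hq, hqa]
    have := hA y z
    linear_combination (-z) * this
  · intro x y z
    rw [hf, hq, hr, hqa]
    have h6 := hA y z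
    linear_combination (-2*x*z^2) * h6 - z^4 * hst2
  · intro y z
    have h := key2 y z
    rw [hqa] at h
    have hkey : (qb * y + qc * z) ^ 2 ≤ t * (pa * y ^ 2 + pb * y * z + pc * z ^ 2) := by
      rcases eq_or_ne z 0 with hz | hz
      · have hcont : Continuous (fun z : ℝ =>
            t * (pa * y ^ 2 + pb * y * z + pc * z ^ 2) - (qb * y + qc * z) ^ 2) := by fun_prop
        have := limit_nonneg _ hcont (fun z hz => by
          have h := key2 y z
          rw [hqa] at h
          have hz2 : (0:ℝ) < z ^ 2 := by positivity
          have hd : 0 ≤ z ^ 2 * (t * (pa * y ^ 2 + pb * y * z + pc * z ^ 2)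
              - (qb * y + qc * z) ^ 2) := by nlinarith [h]
          nlinarith [hd, hz2])
        subst hz
        simpa using this
      · have hz2 : (0:ℝ) < z ^ 2 := by positivity
        have hd : 0 ≤ z ^ 2 * (t * (pa * y ^ 2 + pb * y * z + pc * z ^ 2)
            - (qb * y + qc * z) ^ 2) := by nlinarith [h]
        nlinarith [hd, hz2]
    rw [hp]
    have h6 := hA y z
    have h7 : t * (qb / Real.sqrt t * y + qc / Real.sqrt t * z) ^ 2 = (qb * y + qc * z) ^ 2 := by
      rw [← h6]
      linear_combination (-(qb / Real.sqrt t * y + qc / Real.sqrt t * z) ^ 2) * hst2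
    have h8 : 0 ≤ t * ((pa * y ^ 2 + pb * y * z + pc * z ^ 2)
        - (qb / Real.sqrt t * y + qc / Real.sqrt t * z) ^ 2) := by
      rw [mul_sub, h7]; linarith [hkey]
    nlinarith [h8, ht]
end

section
/- Let f be a positive semi-definite quartic form in ℝ[x,y,z] with f(1,0,0) = f(0,1,0) = f(0,0,1) = 0. Then each variable appears in f with degree at most 2, i.e., f = a x²y² + b y²z² + c z²x² + a₁ x²yz + b₁ y²xz + c₁ z²xy for some real a, b, c, a₁, b₁, c₁. -/
/-!
Since `f ≥ 0` and `f(eᵢ) = 0`, the point `eᵢ` is a global minimum of `f`, so every partial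
derivative `∂f/∂xⱼ` vanishes at `eᵢ`. The value at `eᵢ` of a form of degree `m` is its coefficient
of `xᵢ ^ m`; applied to `f` and to `∂f/∂xⱼ` this kills the coefficients of `xᵢ ^ n` and of
`xᵢ ^ (n - 1) * xⱼ`. Hence every monomial of a nonnegative form of degree `n` vanishing at `eᵢ` has
degree at most `n - 2` in `xᵢ`; for ternary quartics vanishing at all three `eᵢ` this leaves only
the six monomials of the statement.
-/

open MvPolynomial

theorem Finsupp.exists_eq_single_of_degree_eq_one {σ : Type*} {e : σ →₀ ℕ} (h : e.degree = 1) :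
    ∃ j, e = Finsupp.single j 1 := by
  obtain ⟨j, hj⟩ : ∃ j, e j ≠ 0 := by
    by_contra! h0
    have he : e = 0 := Finsupp.ext h0
    simp [he] at h
  have hle : Finsupp.single j 1 ≤ e := by
    rw [Finsupp.single_le_iff]
    omega
  have hrest : (e - Finsupp.single j 1).degree = 0 := by
    have := map_add Finsupp.degree (e - Finsupp.single j 1) (Finsupp.single j 1)
    rw [tsub_add_cancel_of_le hle, h, Finsupp.degree_single] at this
    omega
  exact ⟨j, (tsub_eq_zero_iff_le.1 ((Finsupp.degree_eq_zero_iff _).1 hrest)).antisymm hle⟩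

namespace MvPolynomial

section CommSemiring

variable {σ R : Type*} [CommSemiring R]

theorem IsHomogeneous.degree_eq_of_mem_support {p : MvPolynomial σ R} {n : ℕ}
    (hp : p.IsHomogeneous n) {d : σ →₀ ℕ} (hd : d ∈ p.support) : d.degree = n :=
  not_imp_comm.1 hp.coeff_eq_zero (mem_support_iff.1 hd)

theorem IsHomogeneous.eval_single_one [DecidableEq σ] {p : MvPolynomial σ R} {n : ℕ}
    (hp : p.IsHomogeneous n) (i : σ) : eval (Pi.single i 1) p = coeff (Finsupp.single i n) p := by
  rw [eval_eq, Finset.sum_eq_single (Finsupp.single i n)]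
  · rw [Finset.prod_eq_one, mul_one]
    intro k hk
    rw [Finsupp.mem_support_single] at hk
    simp [hk.1]
  · intro d hd hne
    obtain ⟨k, hk, hki⟩ : ∃ k ∈ d.support, k ≠ i := by
      by_contra! hsub
      have hd_eq : d = Finsupp.single i (d i) := by
        rw [Finsupp.eq_single_iff]
        exact ⟨fun k hk => Finset.mem_singleton.2 (hsub k hk), rfl⟩
      have hdeg := hp.degree_eq_of_mem_support hd
      rw [hd_eq, Finsupp.degree_single] at hdeg
      exact hne (hdeg ▸ hd_eq)
    rw [Finset.prod_eq_zero hk (by simp [hki, Finsupp.mem_support_iff.1 hk]), mul_zero]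
  · intro h
    rw [notMem_support_iff.1 h, zero_mul]

end CommSemiring

section Real

variable {σ : Type*} [DecidableEq σ]

theorem hasDerivAt_eval_update (p : MvPolynomial σ ℝ) (x : σ → ℝ) (j : σ) (s : ℝ) :
    HasDerivAt (fun t => eval (Function.update x j t) p)
      (eval (Function.update x j s) (pderiv j p)) s := by
  induction p using MvPolynomial.induction_on with
  | C a => simpa using hasDerivAt_const s a
  | add p q hp hq => simpa using hp.fun_add hq
  | mul_X p k hp =>
    have hX : HasDerivAt (fun t => eval (Function.update x j t) (X k))
        (eval (Function.update x j s) (pderiv j (X k))) s := by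
      rcases eq_or_ne k j with rfl | hk
      · simpa [pderiv_X] using hasDerivAt_id' s
      · simpa [pderiv_X, hk, Pi.single_apply] using hasDerivAt_const s (x k)
    have hleib : eval (Function.update x j s) (pderiv j (p * X k)) =
        eval (Function.update x j s) (pderiv j p) * eval (Function.update x j s) (X k) +
          eval (Function.update x j s) p * eval (Function.update x j s) (pderiv j (X k)) := by
      rw [Derivation.leibniz, map_add, smul_eq_mul, smul_eq_mul, map_mul, map_mul]
      ring
    rw [hleib]
    simp only [map_mul]
    exact hp.mul hX

theorem eval_pderiv_eq_zero_of_forall_le {p : MvPolynomial σ ℝ} {x : σ → ℝ}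
    (hmin : ∀ y, eval x p ≤ eval y p) (j : σ) : eval x (pderiv j p) = 0 := by
  have hloc : IsLocalMin (fun t => eval (Function.update x j t) p) (x j) :=
    Filter.Eventually.of_forall fun t => by simpa using hmin (Function.update x j t)
  simpa using hloc.hasDerivAt_eq_zero (hasDerivAt_eval_update p x j (x j))

theorem coeff_single_add_single_eq_zero_of_nonneg {f : MvPolynomial σ ℝ} {n : ℕ}
    (hf : f.IsHomogeneous n) (hpsd : ∀ x, 0 ≤ eval x f) {i : σ}
    (hi : eval (Pi.single i 1) f = 0) (j : σ) :
    coeff (Finsupp.single i (n - 1) + Finsupp.single j 1) f = 0 := by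
  have hcrit := eval_pderiv_eq_zero_of_forall_le (fun y => hi ▸ hpsd y) j
  rw [hf.pderiv.eval_single_one, coeff_pderiv] at hcrit
  exact (mul_eq_zero.1 hcrit).resolve_right (by positivity)

theorem add_two_le_of_mem_support_of_nonneg {f : MvPolynomial σ ℝ} {n : ℕ}
    (hf : f.IsHomogeneous n) (hpsd : ∀ x, 0 ≤ eval x f) {i : σ}
    (hi : eval (Pi.single i 1) f = 0) {d : σ →₀ ℕ} (hd : d ∈ f.support) : d i + 2 ≤ n := by
  by_contra hlt
  have hdeg : d i + (d.erase i).degree = n := by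
    rw [← Finsupp.degree_single i (d i), ← map_add, Finsupp.single_add_erase]
    exact hf.degree_eq_of_mem_support hd
  have hcoeff : coeff d f ≠ 0 := mem_support_iff.1 hd
  rcases (show (d.erase i).degree = 0 ∨ (d.erase i).degree = 1 by omega) with h0 | h1
  · have hd_eq : d = Finsupp.single i n := by
      rw [← Finsupp.single_add_erase i d, (Finsupp.degree_eq_zero_iff _).1 h0, add_zero]
      congr 1
      omega
    exact hcoeff (hd_eq ▸ hf.eval_single_one i ▸ hi)
  · obtain ⟨j, hj⟩ := Finsupp.exists_eq_single_of_degree_eq_one h1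
    have hd_eq : d = Finsupp.single i (n - 1) + Finsupp.single j 1 := by
      rw [← Finsupp.single_add_erase i d, hj]
      congr 2
      omega
    exact hcoeff (hd_eq ▸ coeff_single_add_single_eq_zero_of_nonneg hf hpsd hi j)

end Real

section Ternary

variable {R : Type*} [CommSemiring R]

theorem monomial_equivFunOnFinite_symm (v : Fin 3 → ℕ) (c : R) :
    monomial (Finsupp.equivFunOnFinite.symm v) c = C c * X 0 ^ v 0 * X 1 ^ v 1 * X 2 ^ v 2 := by
  rw [monomial_eq, Finsupp.prod_fintype _ _ (by simp), Fin.prod_univ_three]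
  simp [mul_assoc]

theorem exists_eq_of_isHomogeneous_four_of_le_two {f : MvPolynomial (Fin 3) R}
    (hf : f.IsHomogeneous 4) (hle : ∀ d ∈ f.support, ∀ i, d i ≤ 2) :
    ∃ a b c a₁ b₁ c₁ : R,
      f = C a * X 0 ^ 2 * X 1 ^ 2 + C b * X 1 ^ 2 * X 2 ^ 2 + C c * X 2 ^ 2 * X 0 ^ 2 +
        C a₁ * X 0 ^ 2 * X 1 * X 2 + C b₁ * X 1 ^ 2 * X 0 * X 2 +
        C c₁ * X 2 ^ 2 * X 0 * X 1 := by
  set S : Finset (Fin 3 → ℕ) :=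
    (Fintype.piFinset fun _ => Finset.range 3).filter fun v => v 0 + v 1 + v 2 = 4
  have hS :
      S = [![2, 2, 0], ![0, 2, 2], ![2, 0, 2], ![2, 1, 1], ![1, 2, 1], ![1, 1, 2]].toFinset := by
    decide
  have hsupp : f.support ⊆ S.map Finsupp.equivFunOnFinite.symm.toEmbedding := by
    intro d hd
    refine Finset.mem_map_equiv.2 (Finset.mem_filter.2 ⟨?_, ?_⟩)
    · simpa [Nat.lt_succ_iff] using hle d hd
    · simpa [Finsupp.degree_eq_sum, Fin.sum_univ_three] using hf.degree_eq_of_mem_support hd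
  have hsum : f = ∑ d ∈ S.map Finsupp.equivFunOnFinite.symm.toEmbedding,
      monomial d (coeff d f) := by
    conv_lhs => rw [f.as_sum]
    exact Finset.sum_subset hsupp fun d _ hd => by rw [notMem_support_iff.1 hd, monomial_zero]
  rw [Finset.sum_map, hS, List.sum_toFinset _ (by decide)] at hsum
  simp only [List.map_cons, List.map_nil, List.sum_cons, List.sum_nil, Equiv.coe_toEmbedding,
    monomial_equivFunOnFinite_symm, Matrix.cons_val_zero, Matrix.cons_val_one, Matrix.cons_val_two,
    Matrix.tail_cons, Matrix.head_cons] at hsum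
  let c (v : Fin 3 → ℕ) : R := coeff (Finsupp.equivFunOnFinite.symm v) f
  refine ⟨c ![2, 2, 0], c ![0, 2, 2], c ![2, 0, 2], c ![2, 1, 1], c ![1, 2, 1], c ![1, 1, 2],
    hsum.trans ?_⟩
  ring

end Ternary

end MvPolynomial

theorem stmt_6 (f : MvPolynomial (Fin 3) ℝ) (hhom : f.IsHomogeneous 4)
    (hpsd : ∀ p : Fin 3 → ℝ, 0 ≤ eval p f)
    (h1 : eval ![1, 0, 0] f = 0) (h2 : eval ![0, 1, 0] f = 0)
    (h3 : eval ![0, 0, 1] f = 0) :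
    ∃ a b c a₁ b₁ c₁ : ℝ,
      f = C a * X 0 ^ 2 * X 1 ^ 2 + C b * X 1 ^ 2 * X 2 ^ 2 + C c * X 2 ^ 2 * X 0 ^ 2 +
        C a₁ * X 0 ^ 2 * X 1 * X 2 + C b₁ * X 1 ^ 2 * X 0 * X 2 +
        C c₁ * X 2 ^ 2 * X 0 * X 1 := by
  have hzero : ∀ i : Fin 3, eval (Pi.single i 1) f = 0 := by
    intro i
    fin_cases i <;> [convert h1; convert h2; convert h3] <;> (ext k; fin_cases k <;> rfl)
  refine exists_eq_of_isHomogeneous_four_of_le_two hhom fun d hd i => ?_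
  have := add_two_le_of_mem_support_of_nonneg hhom hpsd (hzero i) hd
  omega
end

section
/- Let f = a x²y² + b y²z² + c z²x² + a₁ x²yz + b₁ y²xz + c₁ z²xy be a positive semi-definite quartic form in ℝ[x,y,z]. Then f is a sum of squares of quadratic forms in x, y, z. -/
/-!
Writing `X = xy`, `Y = yz`, `Z = zx`, the form `f` becomes the quadratic form of a symmetric
`3 × 3` matrix `M` evaluated at `(X, Y, Z)`. Every `(X, Y, Z)` with `XYZ > 0` arises this way
(take `x = √(XYZ) / Y`, `y = √(XYZ) / Z`, `z = √(XYZ) / X`); the quadratic form is even, which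
covers `XYZ < 0`, and the points with `XYZ ≠ 0` are dense. Hence `M` is positive semidefinite,
so `M = ∑ wᵢ wᵢᵀ` and `f = ∑ (wᵢ ⬝ (xy, yz, zx))²`.
-/

open Filter Topology Matrix

lemma Matrix.PosSemidef.exists_dotProduct_mulVec_eq_sum_sq {n : Type*} [Fintype n]
    {M : Matrix n n ℝ} (hM : M.PosSemidef) :
    ∃ (m : ℕ) (w : Fin m → n → ℝ), ∀ x, x ⬝ᵥ M *ᵥ x = ∑ i, (w i ⬝ᵥ x) ^ 2 := by
  obtain ⟨m, w, rfl⟩ := posSemidef_iff_eq_sum_vecMulVec.mp hM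
  refine ⟨m, w, fun x => ?_⟩
  simp [sum_mulVec, vecMulVec_mulVec, sum_dotProduct, smul_dotProduct, dotProduct_comm x, sq]

lemma Continuous.nonneg_of_forall_coord_ne_zero {ι : Type*} [Finite ι] {f : (ι → ℝ) → ℝ}
    (hf : Continuous f) (h : ∀ v, (∀ i, v i ≠ 0) → 0 ≤ f v) (v : ι → ℝ) : 0 ≤ f v := by
  have hlim : Tendsto (fun t : ℝ => f (v + t • 1)) (𝓝[≠] 0) (𝓝 (f v)) := by
    have : Continuous (fun t : ℝ => f (v + t • 1)) := by fun_prop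
    simpa using (this.tendsto 0).mono_left nhdsWithin_le_nhds
  refine ge_of_tendsto hlim ?_
  have hcoord : ∀ i, ∀ᶠ t in 𝓝[≠] (0 : ℝ), v i + t ≠ 0 := fun i =>
    ((eventually_cofinite_ne (-v i)).filter_mono (nhdsNE_le_cofinite 0)).mono
      fun t ht => by grind
  filter_upwards [eventually_all.mpr hcoord] with t ht
  exact h _ (by simpa using ht)

lemma exists_mul_eq_of_mul_pos {X Y Z : ℝ} (h : 0 < X * Y * Z) :
    ∃ x y z : ℝ, x * y = X ∧ y * z = Y ∧ z * x = Z := by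
  have hX : X ≠ 0 := by rintro rfl; simp at h
  have hY : Y ≠ 0 := by rintro rfl; simp at h
  have hZ : Z ≠ 0 := by rintro rfl; simp at h
  have hs := Real.sq_sqrt h.le
  refine ⟨√(X * Y * Z) / Y, √(X * Y * Z) / Z, √(X * Y * Z) / X, ?_, ?_, ?_⟩ <;>
    field_simp <;> rw [hs]

lemma Matrix.posSemidef_of_nonneg_at_pairwise_products {M : Matrix (Fin 3) (Fin 3) ℝ}
    (hM : M.IsHermitian)
    (h : ∀ x y z : ℝ, 0 ≤ ![x * y, y * z, z * x] ⬝ᵥ M *ᵥ ![x * y, y * z, z * x]) :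
    M.PosSemidef := by
  have hpos : ∀ v : Fin 3 → ℝ, 0 < v 0 * v 1 * v 2 → 0 ≤ v ⬝ᵥ M *ᵥ v := by
    intro v hv
    obtain ⟨x, y, z, hxy, hyz, hzx⟩ := exists_mul_eq_of_mul_pos hv
    have hv' : ![x * y, y * z, z * x] = v := by ext i; fin_cases i <;> simp [*]
    simpa only [hv'] using h x y z
  refine .of_dotProduct_mulVec_nonneg hM fun v => ?_
  simp only [star_trivial]
  have hQ : Continuous fun v : Fin 3 → ℝ => v ⬝ᵥ M *ᵥ v := by fun_prop
  refine hQ.nonneg_of_forall_coord_ne_zero (fun v hv => ?_) v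
  rcases (mul_ne_zero (mul_ne_zero (hv 0) (hv 1)) (hv 2)).lt_or_gt with hneg | hpos'
  · simpa [mulVec_neg] using hpos (-v) (by simp only [Pi.neg_apply]; linarith)
  · exact hpos v hpos'

theorem stmt_7 (a b c a₁ b₁ c₁ : ℝ) (f : ℝ → ℝ → ℝ → ℝ)
    (hf : ∀ x y z, f x y z =
      a * x ^ 2 * y ^ 2 + b * y ^ 2 * z ^ 2 + c * z ^ 2 * x ^ 2 +
        a₁ * x ^ 2 * y * z + b₁ * y ^ 2 * x * z + c₁ * z ^ 2 * x * y)
    (hpsd : ∀ x y z, 0 ≤ f x y z) :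
    ∃ (n : ℕ) (g : Fin n → ℝ → ℝ → ℝ → ℝ),
      (∀ i, ∃ A B C D E F : ℝ, ∀ x y z, g i x y z =
        A * x ^ 2 + B * y ^ 2 + C * z ^ 2 + D * x * y + E * y * z + F * z * x) ∧
      ∀ x y z : ℝ, f x y z = ∑ i, g i x y z ^ 2 := by
  set M : Matrix (Fin 3) (Fin 3) ℝ := !![a, b₁ / 2, a₁ / 2; b₁ / 2, b, c₁ / 2; a₁ / 2, c₁ / 2, c]
  have hfM : ∀ x y z, f x y z = ![x * y, y * z, z * x] ⬝ᵥ M *ᵥ ![x * y, y * z, z * x] := by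
    intro x y z
    simp only [hf, M, dotProduct, mulVec, of_apply, Fin.sum_univ_three, cons_val', cons_val_fin_one,
      cons_val_zero, cons_val_one, cons_val]
    ring
  have hM : M.IsHermitian := by
    ext i j
    fin_cases i <;> fin_cases j <;> simp [M]
  obtain ⟨m, w, hw⟩ := (posSemidef_of_nonneg_at_pairwise_products hM
    fun x y z => hfM x y z ▸ hpsd x y z).exists_dotProduct_mulVec_eq_sum_sq
  refine ⟨m, fun i x y z => w i ⬝ᵥ ![x * y, y * z, z * x], fun i => ?_, fun x y z => ?_⟩
  · refine ⟨0, 0, 0, w i 0, w i 1, w i 2, fun x y z => ?_⟩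
    simp only [dotProduct, Fin.sum_univ_three, cons_val_zero, cons_val_one, cons_val]
    ring
  · rw [hfM, hw]
end

section
/- The quartic form f = 4(x⁴ + y⁴ + z⁴) + 21(xy + yz + zx)² − 10(x² + y² + z²)(xy + yz + zx) − 37xyz(x + y + z) equals ½[(−2x² + 5xz + 2y² − 5yz)² + (−2y² + 5yx + 2z² − 5zx)² + (−2z² + 5zy + 2x² − 5xy)²], and in particular f is positive semi-definite and a sum of squares of quadratic forms. -/
theorem stmt_14 (f : ℝ → ℝ → ℝ → ℝ)
    (hf : ∀ x y z, f x y z =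
      4 * (x ^ 4 + y ^ 4 + z ^ 4) + 21 * (x * y + y * z + z * x) ^ 2 -
        10 * (x ^ 2 + y ^ 2 + z ^ 2) * (x * y + y * z + z * x) -
        37 * x * y * z * (x + y + z)) :
    (∀ x y z : ℝ, f x y z = (1 / 2) *
      ((-2 * x ^ 2 + 5 * x * z + 2 * y ^ 2 - 5 * y * z) ^ 2 +
        (-2 * y ^ 2 + 5 * y * x + 2 * z ^ 2 - 5 * z * x) ^ 2 +
        (-2 * z ^ 2 + 5 * z * y + 2 * x ^ 2 - 5 * x * y) ^ 2)) ∧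
    (∀ x y z : ℝ, 0 ≤ f x y z) ∧
    ∃ (n : ℕ) (g : Fin n → ℝ → ℝ → ℝ → ℝ),
      (∀ i, ∃ A B C D E F : ℝ, ∀ x y z, g i x y z =
        A * x ^ 2 + B * y ^ 2 + C * z ^ 2 + D * x * y + E * y * z + F * z * x) ∧
      ∀ x y z : ℝ, f x y z = ∑ i, g i x y z ^ 2 := by
  have hid : ∀ x y z : ℝ, f x y z = (1 / 2) *
      ((-2 * x ^ 2 + 5 * x * z + 2 * y ^ 2 - 5 * y * z) ^ 2 +
        (-2 * y ^ 2 + 5 * y * x + 2 * z ^ 2 - 5 * z * x) ^ 2 +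
        (-2 * z ^ 2 + 5 * z * y + 2 * x ^ 2 - 5 * x * y) ^ 2) := by
    intro x y z; rw [hf]; ring
  refine ⟨hid, fun x y z => by rw [hid]; positivity, 3, ?_⟩
  set s := Real.sqrt 2 with hs
  have hs2 : s ^ 2 = 2 := Real.sq_sqrt (by norm_num)
  have hsne : s ≠ 0 := by positivity
  refine ⟨![fun x y z => (1/s) * (-2 * x ^ 2 + 5 * x * z + 2 * y ^ 2 - 5 * y * z),
           fun x y z => (1/s) * (-2 * y ^ 2 + 5 * y * x + 2 * z ^ 2 - 5 * z * x),
           fun x y z => (1/s) * (-2 * z ^ 2 + 5 * z * y + 2 * x ^ 2 - 5 * x * y)], ?_, ?_⟩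
  · intro i
    fin_cases i
    · exact ⟨-2/s, 2/s, 0, 0, -5/s, 5/s, fun x y z => by simp [Matrix.cons_val_zero]; ring⟩
    · exact ⟨0, -2/s, 2/s, 5/s, 0, -5/s, fun x y z => by simp; ring⟩
    · exact ⟨2/s, 0, -2/s, -5/s, 5/s, 0, fun x y z => by simp; ring⟩
  · intro x y z
    rw [hid x y z]
    have h : s⁻¹ ^ 2 = 1/2 := by rw [inv_pow, hs2]; norm_num
    simp [Fin.sum_univ_three, mul_pow, h]
    ring
end

section
/- The quartic form f = (x² + y² + z²)² − 3(x³y + y³z + z³x) satisfies f(1,1,1) = 0, and for each real root α of t³ − 5t² + 6t − 1 = 0 one obtains further real projective zeros of f; in particular f has at least four zeros in the real projective plane. -/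
private lemma cubic_root_zero (α : ℝ) (h : α ^ 3 - 5 * α ^ 2 + 6 * α - 1 = 0) :
    (((α - 1) ^ 2) ^ 2 + α ^ 2 + 1 ^ 2) ^ 2 -
      3 * (((α - 1) ^ 2) ^ 3 * α + α ^ 3 * 1 + 1 ^ 3 * ((α - 1) ^ 2)) = 0 := by
  linear_combination (α ^ 5 - 6 * α ^ 4 + 12 * α ^ 3 - 12 * α ^ 2 + 7 * α - 1) * h

private lemma cubic_cont : Continuous (fun t : ℝ => t ^ 3 - 5 * t ^ 2 + 6 * t - 1) := by
  continuity

theorem stmt_17 (f : ℝ → ℝ → ℝ → ℝ)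
    (hf : ∀ x y z, f x y z =
      (x ^ 2 + y ^ 2 + z ^ 2) ^ 2 - 3 * (x ^ 3 * y + y ^ 3 * z + z ^ 3 * x)) :
    f 1 1 1 = 0 ∧
    (∀ α : ℝ, α ^ 3 - 5 * α ^ 2 + 6 * α - 1 = 0 → ∃ x : ℝ, f x α 1 = 0) ∧
    ∃ P : Fin 4 → ℝ × ℝ × ℝ,
      (∀ i, P i ≠ 0 ∧ f (P i).1 (P i).2.1 (P i).2.2 = 0) ∧
      ∀ i j, i ≠ j → ∀ c : ℝ, P i ≠ c • P j := by
  have key : ∀ α : ℝ, α ^ 3 - 5 * α ^ 2 + 6 * α - 1 = 0 → f ((α - 1) ^ 2) α 1 = 0 := by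
    intro α h
    rw [hf]
    exact cubic_root_zero α h
  refine ⟨by rw [hf]; norm_num, fun α h => ⟨(α - 1) ^ 2, key α h⟩, ?_⟩
  -- find three roots of the cubic
  have hIVT : ∀ a b : ℝ, a ≤ b →
      (fun t : ℝ => t ^ 3 - 5 * t ^ 2 + 6 * t - 1) a ≤ 0 →
      0 ≤ (fun t : ℝ => t ^ 3 - 5 * t ^ 2 + 6 * t - 1) b →
      ∃ t ∈ Set.Icc a b, t ^ 3 - 5 * t ^ 2 + 6 * t - 1 = 0 := by
    intro a b hab ha hb
    exact intermediate_value_Icc hab cubic_cont.continuousOn ⟨ha, hb⟩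
  have hIVT' : ∀ a b : ℝ, a ≤ b →
      0 ≤ (fun t : ℝ => t ^ 3 - 5 * t ^ 2 + 6 * t - 1) a →
      (fun t : ℝ => t ^ 3 - 5 * t ^ 2 + 6 * t - 1) b ≤ 0 →
      ∃ t ∈ Set.Icc a b, t ^ 3 - 5 * t ^ 2 + 6 * t - 1 = 0 := by
    intro a b hab ha hb
    exact intermediate_value_Icc' hab cubic_cont.continuousOn ⟨hb, ha⟩
  obtain ⟨α₁, hm1, h1⟩ := hIVT 0 1 (by norm_num) (by norm_num) (by norm_num)
  obtain ⟨α₂, hm2, h2⟩ := hIVT' 1 2 (by norm_num) (by norm_num) (by norm_num)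
  obtain ⟨α₃, hm3, h3⟩ := hIVT 2 4 (by norm_num) (by norm_num) (by norm_num)
  obtain ⟨_, h1u⟩ := hm1
  obtain ⟨h2l, h2u⟩ := hm2
  obtain ⟨h3l, _⟩ := hm3
  have hn1 : α₁ ≠ 1 := by rintro rfl; norm_num at h1
  have hn2 : α₂ ≠ 1 := by rintro rfl; norm_num at h2
  have hn2' : α₂ ≠ 2 := by rintro rfl; norm_num at h2
  have hn3 : α₃ ≠ 2 := by rintro rfl; norm_num at h3
  have o1 : α₁ < 1 := lt_of_le_of_ne h1u hn1
  have o2 : (1:ℝ) < α₂ := lt_of_le_of_ne h2l (Ne.symm hn2)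
  have o3 : α₂ < 2 := lt_of_le_of_ne h2u hn2'
  have o4 : (2:ℝ) < α₃ := lt_of_le_of_ne h3l (Ne.symm hn3)
  have key1 := key α₁ h1
  have key2 := key α₂ h2
  have key3 := key α₃ h3
  have key0 : f 1 1 1 = 0 := by rw [hf]; norm_num
  clear hIVT hIVT' key h1u h2l h2u hn1 hn2 hn2' hn3
  refine ⟨![(1, 1, 1), ((α₁ - 1) ^ 2, α₁, 1), ((α₂ - 1) ^ 2, α₂, 1), ((α₃ - 1) ^ 2, α₃, 1)],
    ?_, ?_⟩
  · intro i
    fin_cases i <;>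
      exact ⟨by simp [Prod.ext_iff], by assumption⟩
  · intro i j hij c
    have hval : ∀ u v w u' v' w' : ℝ, ¬ v = v' → w = 1 → w' = 1 →
        ((u, v, w) : ℝ × ℝ × ℝ) ≠ c • (u', v', w') := by
      rintro u v w u' v' w' hv rfl rfl h
      rw [Prod.ext_iff, Prod.ext_iff] at h
      obtain ⟨_, hv', hw⟩ := h
      simp only [Prod.smul_mk, smul_eq_mul, mul_one] at hv' hw
      exact hv (by rw [hv', ← hw, one_mul])
    clear hf key0 key1 key2 key3 h1 h2 h3
    fin_cases i <;> fin_cases j <;>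
      simp only [Matrix.cons_val_zero, Matrix.cons_val_one, Matrix.head_cons,
        Matrix.cons_val_two, Matrix.tail_cons, Matrix.cons_val_three,
        Matrix.cons_val_fin_one, Fin.mk_zero, Fin.mk_one] <;>
      first
        | exact absurd rfl hij
        | exact hval _ _ _ _ _ _ (fun hvv => by linarith) rfl rfl
end

section
/- Let f be a positive semi-definite quartic form in ℝ[x,y,z] whose set of real projective zeros is finite, nonempty, and entirely contained in a single projective line. Then f has at most 2 real projective zeros; equivalently, a psd ternary quartic cannot have exactly three (or more, but finitely many) collinear real projective zeros. -/
/-!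
Pick a basis `u, w` of the plane containing the zeros with `f w ≠ 0`; this is possible
because the projective line has infinitely many points and `f` only finitely many zeros.
Every zero on the line is then `[u + t • w]` for a root `t` of `g t = f (u + t • w)`, a
nonzero polynomial of degree at most `4`. As `g ≥ 0`, each real root of `g` is a local
minimum, hence of multiplicity at least `2`, so `g` has at most two distinct roots.
-/

open MvPolynomial Polynomial

namespace LinearIndependent

variable {K V : Type*} [Field K] [AddCommGroup V] [Module K V] {u w : V}

theorem add_smul_ne_zero (h : LinearIndependent K ![u, w]) (t : K) : u + t • w ≠ 0 :=
  fun h0 => one_ne_zero (pair_iff.mp h 1 t (by rwa [one_smul])).1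

def lineChart (h : LinearIndependent K ![u, w]) (t : K) : Projectivization K V :=
  Projectivization.mk K (u + t • w) (h.add_smul_ne_zero t)

theorem lineChart_injective (h : LinearIndependent K ![u, w]) : Function.Injective h.lineChart := by
  intro s t hst
  obtain ⟨a, ha⟩ := (Projectivization.mk_eq_mk_iff' K _ _ _ _).mp hst
  obtain ⟨ha1, hts⟩ := pair_iff.mp h (a - 1) (a * t - s) (by
    rw [← sub_eq_zero.mpr ha]; module)
  rw [sub_eq_zero.mp ha1, one_mul, sub_eq_zero] at hts
  exact hts.symm

theorem span_pair_eq_of_finrank_eq_two [FiniteDimensional K V] (h : LinearIndependent K ![u, w])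
    {W : Submodule K V} (hW : Module.finrank K W = 2) (hu : u ∈ W) (hw : w ∈ W) :
    Submodule.span K {u, w} = W := by
  refine Submodule.eq_of_le_of_finrank_le (Submodule.span_le.mpr ?_) ?_
  · rintro x (rfl | rfl) <;> assumption
  · have := finrank_span_eq_card h
    rw [Matrix.range_cons, Matrix.range_cons, Matrix.range_empty, Set.union_empty,
      Set.singleton_union] at this
    simp [this, hW]

end LinearIndependent

namespace Polynomial

theorem one_lt_rootMultiplicity_of_nonneg {g : ℝ[X]} (hg : g ≠ 0) (hnn : ∀ t, 0 ≤ g.eval t)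
    {r : ℝ} (hr : g.IsRoot r) : 1 < g.rootMultiplicity r := by
  have hmin : IsLocalMin (fun t => g.eval t) r :=
    Filter.Eventually.of_forall fun t => by simpa [hr.eq_zero] using hnn t
  refine (one_lt_rootMultiplicity_iff_isRoot hg).mpr ⟨hr, ?_⟩
  simpa using hmin.deriv_eq_zero

theorem two_mul_card_roots_toFinset_le_natDegree {g : ℝ[X]} (hnn : ∀ t, 0 ≤ g.eval t) :
    2 * g.roots.toFinset.card ≤ g.natDegree :=
  calc 2 * g.roots.toFinset.card = ∑ r ∈ g.roots.toFinset, 2 := by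
        rw [Finset.sum_const, smul_eq_mul, mul_comm]
    _ ≤ ∑ r ∈ g.roots.toFinset, g.roots.count r := by
        refine Finset.sum_le_sum fun r hr => ?_
        rw [Multiset.mem_toFinset, mem_roots'] at hr
        rw [count_roots]
        exact one_lt_rootMultiplicity_of_nonneg hr.1 hnn hr.2
    _ = Multiset.card g.roots := Multiset.toFinset_sum_count_eq _
    _ ≤ g.natDegree := card_roots' g

end Polynomial

namespace MvPolynomial

variable {σ K : Type*}

theorem IsHomogeneous.eval_smul [CommSemiring K] [Fintype σ] {f : MvPolynomial σ K} {n : ℕ}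
    (hf : f.IsHomogeneous n) (c : K) (x : σ → K) :
    eval (c • x) f = c ^ n * eval x f := by
  rw [eval_eq', eval_eq', Finset.mul_sum]
  refine Finset.sum_congr rfl fun m hm => ?_
  have hdeg : ∑ i, m i = n := by
    rw [← Finsupp.degree_eq_sum, Finsupp.degree_eq_weight_one]
    exact hf (mem_support_iff.mp hm)
  simp only [Pi.smul_apply, smul_eq_mul, mul_pow, Finset.prod_mul_distrib,
    Finset.prod_pow_eq_pow_sum, hdeg]
  ring

noncomputable def alongLine [CommSemiring K] (f : MvPolynomial σ K) (u w : σ → K) : K[X] :=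
  aeval (fun i => Polynomial.C (w i) * Polynomial.X + Polynomial.C (u i)) f

theorem eval_alongLine [CommSemiring K] (f : MvPolynomial σ K) (u w : σ → K) (t : K) :
    (f.alongLine u w).eval t = eval (u + t • w) f := by
  unfold alongLine
  rw [← Polynomial.coe_aeval_eq_eval, ← AlgHom.comp_apply, comp_aeval,
    ← MvPolynomial.coe_aeval_eq_eval]
  exact congrArg (MvPolynomial.aeval · f) (_root_.funext fun i => by simp; ring)

theorem IsHomogeneous.natDegree_alongLine_le [CommSemiring K] {f : MvPolynomial σ K} {n : ℕ}
    (hf : f.IsHomogeneous n) (u w : σ → K) : (f.alongLine u w).natDegree ≤ n := by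
  unfold alongLine
  simpa using aeval_natDegree_le f hf.totalDegree_le _ fun i =>
    natDegree_linear_le (a := w i) (b := u i)

def projZeroLocus [Field K] (f : MvPolynomial σ K) : Set (Projectivization K (σ → K)) :=
  {P | eval P.rep f = 0}

section Field

variable [Field K] [Fintype σ] {f : MvPolynomial σ K} {n : ℕ} {u w : σ → K}

theorem IsHomogeneous.eval_smul_eq_zero_iff (hf : f.IsHomogeneous n) {c : K} (hc : c ≠ 0)
    (x : σ → K) : eval (c • x) f = 0 ↔ eval x f = 0 := by
  simp [hf.eval_smul, hc]

theorem IsHomogeneous.mk_mem_projZeroLocus_iff (hf : f.IsHomogeneous n) {v : σ → K}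
    (hv : v ≠ 0) : Projectivization.mk K v hv ∈ f.projZeroLocus ↔ eval v f = 0 := by
  obtain ⟨a, ha⟩ := Projectivization.exists_smul_eq_mk_rep K v hv
  rw [projZeroLocus, Set.mem_ofPred_eq, ← ha, Units.smul_def, hf.eval_smul_eq_zero_iff a.ne_zero]

theorem IsHomogeneous.exists_eval_add_smul_ne_zero [Infinite K] (hf : f.IsHomogeneous n)
    (hfin : f.projZeroLocus.Finite) (h : LinearIndependent K ![u, w]) :
    ∃ t : K, eval (u + t • w) f ≠ 0 := by
  by_contra! hzero
  refine hfin.not_infinite (Set.infinite_of_injective_forall_mem h.lineChart_injective fun t => ?_)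
  exact (hf.mk_mem_projZeroLocus_iff _).mpr (hzero t)

theorem IsHomogeneous.exists_span_pair_eq_ker [Infinite K] (hf : f.IsHomogeneous n)
    (hfin : f.projZeroLocus.Finite) (hσ : Fintype.card σ = 3) {l : (σ → K) →ₗ[K] K}
    (hl : l ≠ 0) :
    ∃ u w : σ → K, LinearIndependent K ![u, w] ∧
      Submodule.span K {u, w} = LinearMap.ker l ∧ eval w f ≠ 0 := by
  have hker : Module.finrank K (LinearMap.ker l) = 2 := by
    have := Module.Dual.finrank_ker_add_one_of_ne_zero hl
    rw [Module.finrank_fintype_fun_eq_card, hσ] at this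
    omega
  let b := Module.finBasisOfFinrankEq K _ hker
  have hb : LinearIndependent K ![(b 0 : σ → K), b 1] := by
    have h := b.linearIndependent.map' _ (LinearMap.ker l).ker_subtype
    convert h using 1 <;> try rfl
    ext i
    fin_cases i <;> rfl
  obtain ⟨t, ht⟩ :=
    hf.exists_eval_add_smul_ne_zero hfin (LinearIndependent.pair_symm_iff.mp hb)
  have hind : LinearIndependent K ![(b 0 : σ → K), t • (b 0 : σ → K) + b 1] := by
    simpa using hb
  refine ⟨_, _, hind, hind.span_pair_eq_of_finrank_eq_two hker (b 0).2 ?_, by rwa [add_comm]⟩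
  exact (LinearMap.ker l).add_mem ((LinearMap.ker l).smul_mem t (b 0).2) (b 1).2

theorem IsHomogeneous.mem_image_lineChart_roots [DecidableEq K] (hf : f.IsHomogeneous n)
    (h : LinearIndependent K ![u, w]) (hw : eval w f ≠ 0) (hg : f.alongLine u w ≠ 0)
    {P : Projectivization K (σ → K)} (hP : P ∈ f.projZeroLocus)
    (hspan : P.rep ∈ Submodule.span K {u, w}) :
    P ∈ h.lineChart '' (f.alongLine u w).roots.toFinset := by
  obtain ⟨a, b, hab⟩ := Submodule.mem_span_pair.mp hspan
  have ha : a ≠ 0 := by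
    rintro rfl
    rw [zero_smul, zero_add] at hab
    have hb : b = 0 := by
      by_contra hb
      exact hw ((hf.eval_smul_eq_zero_iff hb w).mp (hab ▸ hP))
    exact P.rep_nonzero (by rw [← hab, hb, zero_smul])
  have hrep : a • (u + (b / a) • w) = P.rep := by
    rw [← hab, smul_add, smul_smul, mul_div_cancel₀ _ ha]
  refine ⟨b / a, ?_, ?_⟩
  · rw [Finset.mem_coe, Multiset.mem_toFinset, mem_roots hg, IsRoot, eval_alongLine,
      ← hf.eval_smul_eq_zero_iff ha, hrep]
    exact hP
  · rw [← P.mk_rep]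
    refine (Projectivization.mk_eq_mk_iff' K _ _ _ _).mpr ⟨a⁻¹, ?_⟩
    rw [← hrep, inv_smul_smul₀ ha]

end Field

end MvPolynomial

theorem stmt_19_general (f : MvPolynomial (Fin 3) ℝ) (hhom : f.IsHomogeneous 4)
    (hpsd : ∀ p : Fin 3 → ℝ, 0 ≤ eval p f)
    (S : Set (Projectivization ℝ (Fin 3 → ℝ)))
    (hS : S = {P | eval P.rep f = 0})
    (hfin : S.Finite)
    (hline : ∃ l : (Fin 3 → ℝ) →ₗ[ℝ] ℝ, l ≠ 0 ∧ ∀ P ∈ S, l P.rep = 0) :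
    S.ncard ≤ 2 := by
  obtain ⟨l, hl0, hlS⟩ := hline
  change S = f.projZeroLocus at hS
  subst hS
  obtain ⟨u, w, hind, hspan, hw⟩ := hhom.exists_span_pair_eq_ker hfin (Fintype.card_fin 3) hl0
  obtain ⟨t, ht⟩ := hhom.exists_eval_add_smul_ne_zero hfin hind
  have hg : f.alongLine u w ≠ 0 := fun h0 => ht <| by
    rw [← eval_alongLine, h0, Polynomial.eval_zero]
  have hsub : f.projZeroLocus ⊆ hind.lineChart '' (f.alongLine u w).roots.toFinset :=
    fun P hP => hhom.mem_image_lineChart_roots hind hw hg hP (hspan ▸ hlS P hP)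
  have hroots := two_mul_card_roots_toFinset_le_natDegree fun t =>
    (eval_alongLine f u w t).symm ▸ hpsd (u + t • w)
  have hdeg := hhom.natDegree_alongLine_le u w
  calc f.projZeroLocus.ncard ≤ (hind.lineChart '' (f.alongLine u w).roots.toFinset).ncard :=
        Set.ncard_le_ncard hsub (Set.toFinite _)
    _ ≤ (f.alongLine u w).roots.toFinset.card :=
        (Set.ncard_image_le).trans (Set.ncard_coe_finset _).le
    _ ≤ 2 := by omega

theorem stmt_19 (f : MvPolynomial (Fin 3) ℝ) (hhom : f.IsHomogeneous 4)
    (hpsd : ∀ p : Fin 3 → ℝ, 0 ≤ eval p f)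
    (S : Set (Projectivization ℝ (Fin 3 → ℝ)))
    (hS : S = {P | eval P.rep f = 0})
    (hfin : S.Finite) (hne : S.Nonempty)
    (hline : ∃ l : (Fin 3 → ℝ) →ₗ[ℝ] ℝ, l ≠ 0 ∧ ∀ P ∈ S, l P.rep = 0) :
    S.ncard ≤ 2 :=
  stmt_19_general f hhom hpsd S hS hfin hline
end
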